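/- In the LRC storage model with parameters (k,g,r,l) satisfying the optimal-distance property, let τ ∈ [μ] be the index of an arbitrary local group, and let A ⊆ [g], B ⊆ [l]^τ, and D ⊆ [r]^τ be any subsets of indices of global parity nodes, local parity nodes of group τ, and information nodes of group τ, respectively, with |A| + |B| + |D| ≤ r. Then H(G_A, L_B, X_D | X_{[k]\[r]^τ}) = (|A| + |B| + |D|)·α; that is, G_A, L_B, X_D are conditionally independent given X_{[k]\[r]^τ} and each has full conditional entropy α. -/

import Mathlib

open Finset

open scoped Classical in
/-- Probability that the random variable `X` takes the value `s`, under the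
probability mass function `p` on the finite sample space `Ω`. -/
noncomputable def prEq {Ω : Type*} [Fintype Ω] {S : Type*} (p : Ω → ℝ) (X : Ω → S) (s : S) : ℝ :=
  ∑ ω, if X ω = s then p ω else 0

/-- Shannon entropy `H(X)` of the random variable `X` under the pmf `p`. -/
noncomputable def entropy {Ω : Type*} [Fintype Ω] {S : Type*} (p : Ω → ℝ) (X : Ω → S) : ℝ :=
  -∑ ω, p ω * Real.log (prEq p X (X ω))

/-- Conditional entropy `H(X | Y) = H(X, Y) - H(Y)`. -/
noncomputable def condEntropy {Ω : Type*} [Fintype Ω] {S T : Type*}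
    (p : Ω → ℝ) (X : Ω → S) (Y : Ω → T) : ℝ :=
  entropy p (fun ω => (X ω, Y ω)) - entropy p Y

/-- Conditional mutual information `I(X ; Y | Z) = H(X|Z) + H(Y|Z) - H(X,Y|Z)`. -/
noncomputable def condMI {Ω : Type*} [Fintype Ω] {S T U : Type*}
    (p : Ω → ℝ) (X : Ω → S) (Y : Ω → T) (Z : Ω → U) : ℝ :=
  condEntropy p X Z + condEntropy p Y Z - condEntropy p (fun ω => (X ω, Y ω)) Z

/-- The tuple of random variables `(Z i)_{i ∈ A}`, as a single random variable. -/
def tupleOn {Ω : Type*} {ι : Type*} {S : ι → Type*}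
    (Z : (i : ι) → Ω → S i) (A : Finset ι) (ω : Ω) :
    ∀ i : {x : ι // x ∈ A}, S i.1 := fun i => Z i.1 ω

/-! Bound each of the `|A| + |B| + |D|` nodes by its capacity `α` for the upper bound. For the
lower bound, enlarge `D` inside group `τ` by `|A| + |B|` further information nodes `F`. Given
`G_A, L_B` and all information nodes outside `F`, the local parities of the other groups are known,
so the optimal-distance property (erasing `G` off `A`, the local parities of group `τ` off `B`, and
`X_F`: exactly `g + l` nodes) recovers `X_F`. Hence `G_A, L_B, X_D` carry all the information of
the `|A| + |B| + |D|` independent nodes `X_{D ∪ F}`, each of entropy `α`. -/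

theorem sum_mul_log_nonpos {ι : Type*} [Fintype ι] {w f : ι → ℝ} (hw : ∀ i, 0 ≤ w i)
    (hw1 : ∑ i, w i = 1) (hf : ∀ i, 0 < w i → 0 < f i) (hwf : ∑ i, w i * f i ≤ 1) :
    ∑ i, w i * Real.log (f i) ≤ 0 := by
  have hterm : ∀ i, w i * Real.log (f i) ≤ w i * f i - w i := by
    intro i
    rcases (hw i).eq_or_lt with h0 | h0
    · simp [← h0]
    · nlinarith [Real.log_le_sub_one_of_pos (hf i h0)]
  calc ∑ i, w i * Real.log (f i) ≤ ∑ i, (w i * f i - w i) := sum_le_sum fun i _ => hterm i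
    _ ≤ 0 := by rw [sum_sub_distrib, hw1]; linarith

section Determines

variable {Ω S T U : Type*}

def Determines (X : Ω → S) (Y : Ω → T) : Prop :=
  ∀ ω ω', X ω = X ω' → Y ω = Y ω'

theorem determines_self (X : Ω → S) : Determines X X := fun _ _ => id

theorem Determines.trans {X : Ω → S} {Y : Ω → T} {Z : Ω → U}
    (hXY : Determines X Y) (hYZ : Determines Y Z) : Determines X Z :=
  fun ω ω' h => hYZ ω ω' (hXY ω ω' h)

theorem Determines.pair {X : Ω → S} {Y : Ω → T} {Z : Ω → U}
    (hY : Determines X Y) (hZ : Determines X Z) : Determines X fun ω => (Y ω, Z ω) :=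
  fun ω ω' h => Prod.ext (hY ω ω' h) (hZ ω ω' h)

theorem determines_fst (X : Ω → S) (Y : Ω → T) : Determines (fun ω => (X ω, Y ω)) X :=
  fun _ _ h => congrArg Prod.fst h

theorem determines_snd (X : Ω → S) (Y : Ω → T) : Determines (fun ω => (X ω, Y ω)) Y :=
  fun _ _ h => congrArg Prod.snd h

theorem tupleOn_eq_tupleOn_iff {ι : Type*} {Sι : ι → Type*} (Z : ∀ i, Ω → Sι i)
    (A : Finset ι) (ω ω' : Ω) :
    tupleOn Z A ω = tupleOn Z A ω' ↔ ∀ i ∈ A, Z i ω = Z i ω' :=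
  ⟨fun h i hi => congrFun h ⟨i, hi⟩, fun h => funext fun i => h i.1 i.2⟩

theorem determines_tupleOn_of_subset_union {ι : Type*} [DecidableEq ι] {Sι : ι → Type*}
    (Z : ∀ i, Ω → Sι i) {A B C : Finset ι} (h : A ⊆ B ∪ C) :
    Determines (fun ω => (tupleOn Z B ω, tupleOn Z C ω)) (tupleOn Z A) := by
  intro ω ω' hBC
  simp only [Prod.ext_iff, tupleOn_eq_tupleOn_iff] at hBC ⊢
  intro i hi
  rcases mem_union.1 (h hi) with hi | hi
  exacts [hBC.1 i hi, hBC.2 i hi]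

theorem determines_tupleOn_of_subset {ι : Type*} {Sι : ι → Type*} (Z : ∀ i, Ω → Sι i)
    {A B : Finset ι} (h : A ⊆ B) : Determines (tupleOn Z B) (tupleOn Z A) := fun ω ω' hB =>
  (tupleOn_eq_tupleOn_iff Z A ω ω').2 fun i hi =>
    (tupleOn_eq_tupleOn_iff Z B ω ω').1 hB i (h hi)

end Determines

section Entropy

variable {Ω : Type*} [Fintype Ω] {S T U V : Type*} {p : Ω → ℝ}

theorem prEq_nonneg (hp0 : ∀ ω, 0 ≤ p ω) (X : Ω → S) (s : S) : 0 ≤ prEq p X s :=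
  sum_nonneg fun ω _ => by split_ifs <;> simp [hp0 ω]

theorem le_prEq (hp0 : ∀ ω, 0 ≤ p ω) (X : Ω → S) (ω : Ω) : p ω ≤ prEq p X (X ω) := by
  classical
  unfold prEq
  simpa using single_le_sum (f := fun ω' => if X ω' = X ω then p ω' else 0)
    (fun ω' _ => by split_ifs <;> simp [hp0 ω']) (mem_univ ω)

theorem prEq_le_prEq (hp0 : ∀ ω, 0 ≤ p ω) {X : Ω → S} {Y : Ω → T} {s : S} {t : T}
    (h : ∀ ω, X ω = s → Y ω = t) : prEq p X s ≤ prEq p Y t :=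
  sum_le_sum fun ω _ => by
    by_cases hs : X ω = s
    · simp [hs, h ω hs]
    · simp only [hs, if_false]; split_ifs <;> simp [hp0 ω]

theorem entropy_le_of_determines (hp0 : ∀ ω, 0 ≤ p ω) {X : Ω → S} {Y : Ω → T}
    (h : Determines X Y) : entropy p Y ≤ entropy p X := by
  refine neg_le_neg (sum_le_sum fun ω _ => ?_)
  rcases (hp0 ω).eq_or_lt with h0 | h0
  · simp [← h0]
  · exact mul_le_mul_of_nonneg_left (Real.log_le_log (h0.trans_le (le_prEq hp0 X ω))
      (prEq_le_prEq hp0 fun ω' hx => h ω' ω hx)) (hp0 ω)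

theorem entropy_congr {X : Ω → S} {Y : Ω → T} (hXY : Determines X Y) (hYX : Determines Y X) :
    entropy p X = entropy p Y := by
  classical
  unfold entropy prEq
  congr 1
  refine sum_congr rfl fun ω _ => ?_
  congr 2
  exact sum_congr rfl fun ω' _ => if_congr ⟨hXY ω' ω, hYX ω' ω⟩ rfl rfl

theorem condEntropy_nonneg (hp0 : ∀ ω, 0 ≤ p ω) (X : Ω → S) (Y : Ω → T) :
    0 ≤ condEntropy p X Y :=
  sub_nonneg.2 (entropy_le_of_determines hp0 (determines_snd X Y))

theorem condEntropy_eq_zero_of_determines {X : Ω → S} {Y : Ω → T} (h : Determines Y X) :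
    condEntropy p X Y = 0 :=
  sub_eq_zero.2 (entropy_congr (determines_snd X Y) (h.pair (determines_self Y)))

theorem condEntropy_pair (X : Ω → S) (Y : Ω → T) (Z : Ω → U) :
    condEntropy p (fun ω => (X ω, Y ω)) Z
      = condEntropy p Y Z + condEntropy p X (fun ω => (Y ω, Z ω)) := by
  unfold condEntropy
  rw [entropy_congr (X := fun ω => ((X ω, Y ω), Z ω)) (Y := fun ω => (X ω, (Y ω, Z ω)))
    (fun _ _ h => by simp_all [Prod.ext_iff]) (fun _ _ h => by simp_all [Prod.ext_iff])]
  ring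

theorem sum_mul_comp_eq_sum_prEq_mul [DecidableEq V] (W : Ω → V) (F : V → ℝ) :
    ∑ ω, p ω * F (W ω) = ∑ v ∈ univ.image W, prEq p W v * F v := by
  rw [← sum_fiberwise_of_maps_to (g := W) (t := univ.image W)
    fun ω _ => mem_image_of_mem W (mem_univ ω)]
  refine sum_congr rfl fun v _ => ?_
  rw [sum_filter, prEq, sum_mul]
  refine sum_congr rfl fun ω _ => ?_
  split_ifs <;> simp_all

theorem sum_mul_div_prEq_le [DecidableEq V] (hp0 : ∀ ω, 0 ≤ p ω) (W : Ω → V)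
    {F : V → ℝ} (hF : ∀ v, 0 ≤ F v) :
    ∑ ω, p ω * (F (W ω) / prEq p W (W ω)) ≤ ∑ v ∈ univ.image W, F v := by
  rw [sum_mul_comp_eq_sum_prEq_mul W fun v => F v / prEq p W v]
  refine sum_le_sum fun v _ => ?_
  rcases (prEq_nonneg hp0 W v).eq_or_lt with h | h
  · simp [← h, hF v]
  · rw [mul_div_cancel₀ _ h.ne']

theorem sum_prEq_image [DecidableEq V] (W : Ω → V) :
    ∑ v ∈ univ.image W, prEq p W v = ∑ ω, p ω := by
  simpa using (sum_mul_comp_eq_sum_prEq_mul (p := p) W fun _ => 1).symm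

theorem sum_prEq_pair_left [DecidableEq S] (X : Ω → S) (Z : Ω → U) (z : U) :
    ∑ x ∈ univ.image X, prEq p (fun ω => (X ω, Z ω)) (x, z) = prEq p Z z := by
  unfold prEq
  rw [sum_comm]
  refine sum_congr rfl fun ω _ => ?_
  by_cases hz : Z ω = z
  · simp [hz]
  · simp [hz]

theorem sum_mul_prEq_ratio_le_one (hp0 : ∀ ω, 0 ≤ p ω) (hp1 : ∑ ω, p ω = 1)
    (X : Ω → S) (Y : Ω → T) (Z : Ω → U) :
    ∑ ω, p ω * (prEq p (fun ω => (X ω, Z ω)) (X ω, Z ω)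
      * prEq p (fun ω => (Y ω, Z ω)) (Y ω, Z ω)
      / (prEq p (fun ω => ((X ω, Y ω), Z ω)) ((X ω, Y ω), Z ω) * prEq p Z (Z ω)))
      ≤ 1 := by
  classical
  set F : (S × T) × U → ℝ := fun s =>
    prEq p (fun ω => (X ω, Z ω)) (s.1.1, s.2) * prEq p (fun ω => (Y ω, Z ω)) (s.1.2, s.2)
      / prEq p Z s.2
  have hF : ∀ s, 0 ≤ F s := fun s =>
    div_nonneg (mul_nonneg (prEq_nonneg hp0 _ _) (prEq_nonneg hp0 _ _)) (prEq_nonneg hp0 _ _)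
  have hsub : univ.image (fun ω => ((X ω, Y ω), Z ω))
      ⊆ (univ.image X ×ˢ univ.image Y) ×ˢ univ.image Z := by
    intro s hs
    obtain ⟨ω, -, rfl⟩ := mem_image.1 hs
    simp only [mem_product, mem_image_of_mem _ (mem_univ ω), and_self]
  have hz : ∀ z, ∑ x ∈ univ.image X, ∑ y ∈ univ.image Y, F ((x, y), z) = prEq p Z z := by
    intro z
    simp only [F, ← sum_div, ← sum_mul_sum, sum_prEq_pair_left, mul_self_div_self]
  calc _ = ∑ ω, p ω * (F ((X ω, Y ω), Z ω) / prEq p (fun ω => ((X ω, Y ω), Z ω))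
          ((X ω, Y ω), Z ω)) := sum_congr rfl fun ω _ => by simp only [F]; ring
    _ ≤ ∑ s ∈ univ.image (fun ω => ((X ω, Y ω), Z ω)), F s := sum_mul_div_prEq_le hp0 _ hF
    _ ≤ ∑ s ∈ (univ.image X ×ˢ univ.image Y) ×ˢ univ.image Z, F s :=
          sum_le_sum_of_subset_of_nonneg hsub fun s _ _ => hF s
    _ = 1 := by rw [sum_product_right]; simp only [sum_product, hz, sum_prEq_image, hp1]

theorem condMI_nonneg (hp0 : ∀ ω, 0 ≤ p ω) (hp1 : ∑ ω, p ω = 1)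
    (X : Ω → S) (Y : Ω → T) (Z : Ω → U) : 0 ≤ condMI p X Y Z := by
  -- Gibbs: `I(X;Y|Z) = -𝔼 log (a b / (c d))` while `𝔼 (a b / (c d)) ≤ 1`.
  set a : Ω → ℝ := fun ω => prEq p (fun ω => (X ω, Z ω)) (X ω, Z ω)
  set b : Ω → ℝ := fun ω => prEq p (fun ω => (Y ω, Z ω)) (Y ω, Z ω)
  set c : Ω → ℝ := fun ω => prEq p (fun ω => ((X ω, Y ω), Z ω)) ((X ω, Y ω), Z ω)
  set d : Ω → ℝ := fun ω => prEq p Z (Z ω)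
  have hpos : ∀ ω, 0 < p ω → 0 < a ω ∧ 0 < b ω ∧ 0 < c ω ∧ 0 < d ω := fun ω h0 =>
    ⟨h0.trans_le (le_prEq hp0 _ ω), h0.trans_le (le_prEq hp0 _ ω),
      h0.trans_le (le_prEq hp0 _ ω), h0.trans_le (le_prEq hp0 _ ω)⟩
  have hlog : ∀ ω, p ω * Real.log (a ω * b ω / (c ω * d ω))
      = p ω * Real.log (a ω) + p ω * Real.log (b ω) - p ω * Real.log (c ω)
        - p ω * Real.log (d ω) := by
    intro ω
    rcases (hp0 ω).eq_or_lt with h0 | h0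
    · simp [← h0]
    obtain ⟨ha, hb, hc, hd⟩ := hpos ω h0
    rw [Real.log_div (by positivity) (by positivity), Real.log_mul ha.ne' hb.ne',
      Real.log_mul hc.ne' hd.ne']
    ring
  have hgibbs : ∑ ω, p ω * Real.log (a ω * b ω / (c ω * d ω)) ≤ 0 :=
    sum_mul_log_nonpos hp0 hp1
      (fun ω h0 => by obtain ⟨ha, hb, hc, hd⟩ := hpos ω h0; positivity)
    (sum_mul_prEq_ratio_le_one hp0 hp1 X Y Z)
  simp only [hlog, sum_sub_distrib, sum_add_distrib] at hgibbs
  simp only [condMI, condEntropy, entropy]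
  linarith

theorem condEntropy_pair_le (hp0 : ∀ ω, 0 ≤ p ω) (hp1 : ∑ ω, p ω = 1)
    (X : Ω → S) (Y : Ω → T) (Z : Ω → U) :
    condEntropy p (fun ω => (X ω, Y ω)) Z ≤ condEntropy p X Z + condEntropy p Y Z := by
  have := condMI_nonneg hp0 hp1 X Y Z
  rw [condMI] at this
  linarith

theorem condEntropy_triple_le (hp0 : ∀ ω, 0 ≤ p ω) (hp1 : ∑ ω, p ω = 1)
    (X : Ω → S) (Y : Ω → T) (W : Ω → V) (Z : Ω → U) :
    condEntropy p (fun ω => (X ω, Y ω, W ω)) Z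
      ≤ condEntropy p X Z + condEntropy p Y Z + condEntropy p W Z := by
  linarith [condEntropy_pair_le hp0 hp1 X (fun ω => (Y ω, W ω)) Z,
    condEntropy_pair_le hp0 hp1 Y W Z]

theorem condEntropy_pair_cond_le (hp0 : ∀ ω, 0 ≤ p ω) (hp1 : ∑ ω, p ω = 1)
    (X : Ω → S) (Y : Ω → T) (Z : Ω → U) :
    condEntropy p X (fun ω => (Y ω, Z ω)) ≤ condEntropy p X Z := by
  have := condMI_nonneg hp0 hp1 X Y Z
  rw [condMI, condEntropy_pair] at this
  linarith

theorem condEntropy_congr_right {X : Ω → S} {Y : Ω → T} {Y' : Ω → U}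
    (h : Determines Y Y') (h' : Determines Y' Y) : condEntropy p X Y = condEntropy p X Y' := by
  unfold condEntropy
  rw [entropy_congr h h', entropy_congr ((determines_fst X Y).pair ((determines_snd X Y).trans h))
    ((determines_fst X Y').pair ((determines_snd X Y').trans h'))]

theorem condEntropy_le_of_determines_left (hp0 : ∀ ω, 0 ≤ p ω) {X : Ω → S} {X' : Ω → T}
    (h : Determines X X') (Z : Ω → U) : condEntropy p X' Z ≤ condEntropy p X Z :=
  sub_le_sub_right (entropy_le_of_determines hp0
    (((determines_fst X Z).trans h).pair (determines_snd X Z))) _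

theorem condEntropy_le_of_determines_right (hp0 : ∀ ω, 0 ≤ p ω) (hp1 : ∑ ω, p ω = 1)
    (X : Ω → S) {W : Ω → T} {Z : Ω → U} (h : Determines W Z) :
    condEntropy p X W ≤ condEntropy p X Z := by
  rw [condEntropy_congr_right (Y' := fun ω => (W ω, Z ω)) ((determines_self W).pair h)
    (determines_fst W Z)]
  exact condEntropy_pair_cond_le hp0 hp1 X W Z

theorem condEntropy_le_add (hp0 : ∀ ω, 0 ≤ p ω) (X : Ω → S) (Y : Ω → T) (Z : Ω → U) :
    condEntropy p X Z ≤ condEntropy p Y Z + condEntropy p X (fun ω => (Y ω, Z ω)) := by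
  rw [← condEntropy_pair]
  exact condEntropy_le_of_determines_left hp0 (determines_fst X Y) Z

theorem condEntropy_le_of_determines_pair (hp0 : ∀ ω, 0 ≤ p ω) {X : Ω → S} {Y : Ω → T}
    {Z : Ω → U} (h : Determines (fun ω => (Y ω, Z ω)) X) :
    condEntropy p X Z ≤ condEntropy p Y Z := by
  simpa [condEntropy_eq_zero_of_determines h] using condEntropy_le_add hp0 X Y Z

theorem condEntropy_eq_zero_trans (hp0 : ∀ ω, 0 ≤ p ω) (hp1 : ∑ ω, p ω = 1)
    {X : Ω → S} {Y : Ω → T} {Z : Ω → U} (hXY : condEntropy p X Y = 0)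
    (hYZ : condEntropy p Y Z = 0) : condEntropy p X Z = 0 := by
  refine le_antisymm ?_ (condEntropy_nonneg hp0 _ _)
  calc condEntropy p X Z ≤ condEntropy p Y Z + condEntropy p X (fun ω => (Y ω, Z ω)) :=
        condEntropy_le_add hp0 X Y Z
    _ ≤ 0 + condEntropy p X Y :=
        add_le_add hYZ.le (condEntropy_le_of_determines_right hp0 hp1 X (determines_fst Y Z))
    _ = 0 := by rw [hXY, add_zero]

theorem condEntropy_const (hp1 : ∑ ω, p ω = 1) (X : Ω → S) (u : U) :
    condEntropy p X (fun _ => u) = entropy p X := by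
  have hu : prEq p (fun _ : Ω => u) u = 1 := by simpa [prEq] using hp1
  rw [condEntropy, entropy_congr (determines_fst X fun _ => u)
    ((determines_self X).pair fun _ _ _ => rfl)]
  simp [entropy, hu]

theorem condEntropy_le_entropy (hp0 : ∀ ω, 0 ≤ p ω) (hp1 : ∑ ω, p ω = 1)
    (X : Ω → S) (Z : Ω → U) : condEntropy p X Z ≤ entropy p X := by
  rw [← condEntropy_const hp1 X ()]
  exact condEntropy_le_of_determines_right hp0 hp1 X fun _ _ _ => rfl

section Tuples

variable {ι : Type*} {Sι : ι → Type*}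

theorem condEntropy_tupleOn_le_sum (hp0 : ∀ ω, 0 ≤ p ω) (hp1 : ∑ ω, p ω = 1)
    (Z : ∀ i, Ω → Sι i) (C : Ω → U) (A : Finset ι) :
    condEntropy p (tupleOn Z A) C ≤ ∑ i ∈ A, condEntropy p (Z i) C := by
  classical
  induction A using Finset.induction_on with
  | empty =>
    rw [condEntropy_eq_zero_of_determines
      fun _ _ _ => funext fun i => absurd i.2 (notMem_empty _), sum_empty]
  | insert i s hi ih =>
    have hdet : Determines (fun ω => (Z i ω, tupleOn Z s ω)) (tupleOn Z (insert i s)) := by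
      intro ω ω' h
      simp only [Prod.ext_iff, tupleOn_eq_tupleOn_iff, forall_mem_insert] at h ⊢
      exact h
    calc condEntropy p (tupleOn Z (insert i s)) C
        ≤ condEntropy p (fun ω => (Z i ω, tupleOn Z s ω)) C :=
          condEntropy_le_of_determines_left hp0 hdet C
      _ ≤ condEntropy p (Z i) C + condEntropy p (tupleOn Z s) C :=
          condEntropy_pair_le hp0 hp1 _ _ _
      _ ≤ ∑ j ∈ insert i s, condEntropy p (Z j) C := by rw [sum_insert hi]; linarith

theorem entropy_tupleOn_le_sum (hp0 : ∀ ω, 0 ≤ p ω) (hp1 : ∑ ω, p ω = 1)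
    (Z : ∀ i, Ω → Sι i) (A : Finset ι) :
    entropy p (tupleOn Z A) ≤ ∑ i ∈ A, entropy p (Z i) := by
  simpa only [condEntropy_const hp1 _ ()] using condEntropy_tupleOn_le_sum hp0 hp1 Z (fun _ => ()) A

theorem condEntropy_tupleOn_le_card_mul (hp0 : ∀ ω, 0 ≤ p ω) (hp1 : ∑ ω, p ω = 1)
    {Z : ∀ i, Ω → Sι i} (C : Ω → U) {A : Finset ι} {c : ℝ}
    (hc : ∀ i ∈ A, entropy p (Z i) ≤ c) :
    condEntropy p (tupleOn Z A) C ≤ A.card * c :=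
  calc condEntropy p (tupleOn Z A) C ≤ ∑ i ∈ A, condEntropy p (Z i) C :=
        condEntropy_tupleOn_le_sum hp0 hp1 Z C A
    _ ≤ ∑ _i ∈ A, c :=
        sum_le_sum fun i hi => (condEntropy_le_entropy hp0 hp1 _ C).trans (hc i hi)
    _ = A.card * c := by rw [sum_const, nsmul_eq_mul]

variable [Fintype ι] [DecidableEq ι]

theorem sum_entropy_le_condEntropy_compl (hp0 : ∀ ω, 0 ≤ p ω) (hp1 : ∑ ω, p ω = 1)
    {X : ∀ i, Ω → Sι i} (hind : entropy p (tupleOn X univ) = ∑ i, entropy p (X i))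
    (T : Finset ι) :
    ∑ i ∈ T, entropy p (X i) ≤ condEntropy p (tupleOn X T) (tupleOn X (univ \ T)) := by
  have hall : entropy p (tupleOn X univ)
      ≤ entropy p (fun ω => (tupleOn X T ω, tupleOn X (univ \ T) ω)) :=
    entropy_le_of_determines hp0 (determines_tupleOn_of_subset_union X (by simp))
  have hrest := entropy_tupleOn_le_sum hp0 hp1 X (univ \ T)
  have hsplit := sum_sdiff (f := fun i => entropy p (X i)) (subset_univ T)
  rw [condEntropy]
  linarith

theorem sum_entropy_le_condEntropy_of_recovers (hp0 : ∀ ω, 0 ≤ p ω) (hp1 : ∑ ω, p ω = 1)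
    {X : ∀ i, Ω → Sι i} (hind : entropy p (tupleOn X univ) = ∑ i, entropy p (X i))
    {T : Finset ι} (P : Ω → V)
    (hrec : condEntropy p (tupleOn X T) (fun ω => (P ω, tupleOn X (univ \ T) ω)) = 0) :
    ∑ i ∈ T, entropy p (X i) ≤ condEntropy p P (tupleOn X (univ \ T)) := by
  have := condEntropy_le_add hp0 (tupleOn X T) P (tupleOn X (univ \ T))
  linarith [sum_entropy_le_condEntropy_compl hp0 hp1 hind T]

end Tuples

end Entropy

section LocalGroups

variable {Ω : Type*} [Fintype Ω] {p : Ω → ℝ}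

theorem card_filter_fst_eq {m n : ℕ} (τ : Fin m) :
    (univ.filter fun x : Fin m × Fin n => x.1 = τ).card = n := by
  rw [show (univ.filter fun x : Fin m × Fin n => x.1 = τ) = {τ} ×ˢ univ by
    ext ⟨_, _⟩; simp [eq_comm]]
  simp

theorem condEntropy_tupleOn_filter_eq_zero (hp0 : ∀ ω, 0 ≤ p ω) (hp1 : ∑ ω, p ω = 1)
    {K I J : Type*} [Fintype I] [Fintype J] [DecidableEq K]
    {SL : I → Type*} {SX : J → Type*} {L : ∀ a, Ω → SL a} {X : ∀ x, Ω → SX x}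
    {gL : I → K} {gX : J → K}
    (hL : ∀ κ, condEntropy p (tupleOn L (univ.filter fun a => gL a = κ))
      (tupleOn X (univ.filter fun x => gX x = κ)) = 0)
    (q : K → Prop) [DecidablePred q] :
    condEntropy p (tupleOn L (univ.filter fun a => q (gL a)))
      (tupleOn X (univ.filter fun x => q (gX x))) = 0 := by
  refine le_antisymm ?_ (condEntropy_nonneg hp0 _ _)
  refine (condEntropy_tupleOn_le_sum hp0 hp1 L _ _).trans (sum_nonpos fun a ha => ?_)
  have hsub : (univ.filter fun x => gX x = gL a) ⊆ univ.filter fun x => q (gX x) := by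
    intro x hx
    simp_all
  calc condEntropy p (L a) (tupleOn X (univ.filter fun x => q (gX x)))
      ≤ condEntropy p (L a) (tupleOn X (univ.filter fun x => gX x = gL a)) :=
        condEntropy_le_of_determines_right hp0 hp1 _ (determines_tupleOn_of_subset X hsub)
    _ ≤ condEntropy p (tupleOn L (univ.filter fun b => gL b = gL a))
          (tupleOn X (univ.filter fun x => gX x = gL a)) :=
        condEntropy_le_of_determines_left hp0
          (fun ω ω' h => (tupleOn_eq_tupleOn_iff L _ ω ω').1 h a (by simp)) _
    _ = 0 := hL (gL a)

theorem condEntropy_info_eq_zero_of_optimalDistance (hp0 : ∀ ω, 0 ≤ p ω)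
    (hp1 : ∑ ω, p ω = 1) {g r l μ : ℕ}
    {SX : Fin μ × Fin r → Type*} {SL : Fin μ × Fin l → Type*} {SG : Fin g → Type*}
    {X : (x : Fin μ × Fin r) → Ω → SX x} {L : (a : Fin μ × Fin l) → Ω → SL a}
    {G : (i : Fin g) → Ω → SG i}
    (hopt : ∀ (Q : Finset (Fin g)) (R : Finset (Fin μ × Fin l)) (S : Finset (Fin μ × Fin r)),
        Q.card + R.card + S.card ≤ g + l →
        condEntropy p
          (fun ω => (tupleOn G Q ω, tupleOn L R ω, tupleOn X S ω))
          (fun ω => (tupleOn G (univ \ Q) ω, tupleOn L (univ \ R) ω,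
            tupleOn X (univ \ S) ω)) = 0)
    {τ : Fin μ}
    (hLout : condEntropy p (tupleOn L (univ.filter fun a => a.1 ≠ τ))
      (tupleOn X (univ.filter fun x => x.1 ≠ τ)) = 0)
    {A : Finset (Fin g)} {B : Finset (Fin μ × Fin l)} {D F : Finset (Fin μ × Fin r)}
    (hB : B ⊆ univ.filter fun a => a.1 = τ) (hF : F ⊆ univ.filter fun x => x.1 = τ)
    (hFcard : F.card = A.card + B.card) :
    condEntropy p (tupleOn X (D ∪ F))
      (fun ω => ((tupleOn G A ω, tupleOn L B ω, tupleOn X D ω),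
        tupleOn X (univ \ (D ∪ F)) ω))
      = 0 := by
  set Cτ : Finset (Fin μ × Fin l) := univ.filter fun a => a.1 = τ
  set Lout := tupleOn L (univ.filter fun a => a.1 ≠ τ)
  set Z := fun ω =>
    ((tupleOn G A ω, tupleOn L B ω, tupleOn X D ω), tupleOn X (univ \ (D ∪ F)) ω)
  have hZX : Determines Z (tupleOn X (univ \ F)) :=
    (((determines_fst _ _).trans fun _ _ h => congrArg (·.2.2) h).pair (determines_snd _ _)).trans
      (determines_tupleOn_of_subset_union X (by intro; simp; tauto))
  have hZXout : Determines Z (tupleOn X (univ.filter fun x => x.1 ≠ τ)) :=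
    hZX.trans (determines_tupleOn_of_subset X fun x hx => by have := @hF x; simp_all)
  have hLoutZ : condEntropy p Lout Z = 0 :=
    condEntropy_eq_zero_trans hp0 hp1 hLout (condEntropy_eq_zero_of_determines hZXout)
  have hcard : (univ \ A).card + (Cτ \ B).card + F.card ≤ g + l := by
    have hBl := card_le_card hB
    have hAg := card_le_univ A
    simp only [card_sdiff_of_subset (subset_univ A), card_sdiff_of_subset hB, card_univ,
      Fintype.card_fin, Cτ, card_filter_fst_eq] at hBl hAg ⊢
    omega
  set O := fun ω => (tupleOn G (univ \ (univ \ A)) ω, tupleOn L (univ \ (Cτ \ B)) ω,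
    tupleOn X (univ \ F) ω)
  have hZO : Determines (fun ω => (Lout ω, Z ω)) O := by
    refine Determines.pair ?_ (Determines.pair ?_ ((determines_snd _ _).trans hZX))
    · exact ((determines_snd _ _).trans fun _ _ h => congrArg (·.1.1) h).trans
        (determines_tupleOn_of_subset G (by simp))
    · refine (((determines_snd _ _).trans fun _ _ h => congrArg (·.1.2.1) h).pair
        (determines_fst _ _)).trans (determines_tupleOn_of_subset_union L fun a ha => ?_)
      simp only [Cτ, mem_sdiff, mem_filter, mem_univ, true_and, not_and_or, not_not,
        mem_union] at ha ⊢
      tauto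
  have hOZ : condEntropy p O Z = 0 := le_antisymm
    ((condEntropy_le_of_determines_pair hp0 hZO).trans hLoutZ.le) (condEntropy_nonneg hp0 _ _)
  have hXO : condEntropy p (tupleOn X F) O = 0 := le_antisymm
    ((condEntropy_le_of_determines_left hp0 (fun _ _ h => congrArg (·.2.2) h) _).trans
      (hopt _ _ _ hcard).le) (condEntropy_nonneg hp0 _ _)
  have hXDF : Determines (fun ω => (tupleOn X F ω, Z ω)) (tupleOn X (D ∪ F)) :=
    ((determines_fst _ _).pair ((determines_snd _ _).trans hZX)).trans
      (determines_tupleOn_of_subset_union X (by intro; simp))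
  exact le_antisymm ((condEntropy_le_of_determines_pair hp0 hXDF).trans
    (condEntropy_eq_zero_trans hp0 hp1 hXO hOZ).le) (condEntropy_nonneg hp0 _ _)

end LocalGroups

theorem optimal_lrc_storage_conditional_uniformity_general
    {Ω : Type*} [Fintype Ω] {g r l μ : ℕ}
    {SX : Fin μ × Fin r → Type*} {SL : Fin μ × Fin l → Type*} {SG : Fin g → Type*}
    (p : Ω → ℝ) (hp0 : ∀ ω, 0 ≤ p ω) (hp1 : ∑ ω, p ω = 1)
    (α : ℝ)
    (X : (x : Fin μ × Fin r) → Ω → SX x)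
    (L : (a : Fin μ × Fin l) → Ω → SL a)
    (G : (i : Fin g) → Ω → SG i)
    (hXindep : entropy p (tupleOn X Finset.univ) = ∑ x, entropy p (X x))
    (hXα : ∀ x, entropy p (X x) = α)
    (hL : ∀ τ : Fin μ,
        condEntropy p (tupleOn L (Finset.univ.filter fun a => a.1 = τ))
          (tupleOn X (Finset.univ.filter fun x => x.1 = τ)) = 0)
    (hLcap : ∀ a, entropy p (L a) ≤ α)
    (hGcap : ∀ i, entropy p (G i) ≤ α)
    (hopt : ∀ (Q : Finset (Fin g)) (R : Finset (Fin μ × Fin l))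
        (S : Finset (Fin μ × Fin r)),
        Q.card + R.card + S.card ≤ g + l →
        condEntropy p
          (fun ω => (tupleOn G Q ω, tupleOn L R ω, tupleOn X S ω))
          (fun ω => (tupleOn G (Finset.univ \ Q) ω, tupleOn L (Finset.univ \ R) ω,
            tupleOn X (Finset.univ \ S) ω)) = 0)
    (τ : Fin μ)
    (A : Finset (Fin g)) (B : Finset (Fin μ × Fin l)) (D : Finset (Fin μ × Fin r))
    (hB : B ⊆ Finset.univ.filter fun a => a.1 = τ)
    (hD : D ⊆ Finset.univ.filter fun x => x.1 = τ)
    (hcard : A.card + B.card + D.card ≤ r) :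
    condEntropy p (fun ω => (tupleOn G A ω, tupleOn L B ω, tupleOn X D ω))
        (tupleOn X (Finset.univ.filter fun x => x.1 ≠ τ))
      = ((A.card + B.card + D.card : ℕ) : ℝ) * α := by
  set C : Finset (Fin μ × Fin r) := univ.filter fun x => x.1 = τ
  set XO := tupleOn X (univ.filter fun x => x.1 ≠ τ)
  obtain ⟨F, hFsub, hFcard⟩ : ∃ F ⊆ C \ D, F.card = A.card + B.card :=
    exists_subset_card_eq (by rw [card_sdiff_of_subset hD, card_filter_fst_eq]; omega)
  have hF : F ⊆ C := hFsub.trans sdiff_subset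
  have hDF : Disjoint D F := disjoint_of_subset_right hFsub disjoint_sdiff
  have hXO : Determines (tupleOn X (univ \ (D ∪ F))) XO :=
    determines_tupleOn_of_subset X fun x hx => by have := @hD x; have := @hF x; simp_all [C]
  have hLout : condEntropy p (tupleOn L (univ.filter fun a => a.1 ≠ τ)) XO = 0 :=
    condEntropy_tupleOn_filter_eq_zero hp0 hp1 hL (· ≠ τ)
  have hrec := condEntropy_info_eq_zero_of_optimalDistance (D := D) hp0 hp1 hopt hLout hB hF hFcard
  refine le_antisymm ?_ ?_
  · have hGA := condEntropy_tupleOn_le_card_mul hp0 hp1 XO fun i (_ : i ∈ A) => hGcap i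
    have hLB := condEntropy_tupleOn_le_card_mul hp0 hp1 XO fun a (_ : a ∈ B) => hLcap a
    have hXD := condEntropy_tupleOn_le_card_mul hp0 hp1 XO fun x (_ : x ∈ D) => (hXα x).le
    have := condEntropy_triple_le hp0 hp1 (tupleOn G A) (tupleOn L B) (tupleOn X D) XO
    push_cast
    linarith
  · calc ((A.card + B.card + D.card : ℕ) : ℝ) * α = ∑ x ∈ D ∪ F, entropy p (X x) := by
          rw [sum_congr rfl fun x _ => hXα x, sum_const, nsmul_eq_mul,
            card_union_of_disjoint hDF, hFcard]
          push_cast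
          ring
      _ ≤ condEntropy p (fun ω => (tupleOn G A ω, tupleOn L B ω, tupleOn X D ω))
            (tupleOn X (univ \ (D ∪ F))) :=
          sum_entropy_le_condEntropy_of_recovers hp0 hp1 hXindep _ hrec
      _ ≤ _ := condEntropy_le_of_determines_right hp0 hp1 _ hXO

/-- In the LRC storage model with parameters `(k, g, r, l)` (with
`μ = k/r` local groups, per-node capacity `α > 0`) satisfying the optimal-distance
property (any `g + l` nodes are a function of the remaining nodes), let `τ` be the index
of an arbitrary local group, and let `A`, `B`, `D` be any subsets of indices of global
parity nodes, local parity nodes of group `τ`, and information nodes of group `τ`,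
respectively, with `|A| + |B| + |D| ≤ r`.  Then
`H(G_A, L_B, X_D | X_{[k]∖[r]^τ}) = (|A| + |B| + |D|)·α`; that is, `G_A, L_B, X_D` are
conditionally independent given the information nodes outside group `τ`, each with full
conditional entropy `α`. -/
theorem optimal_lrc_storage_conditional_uniformity
    {Ω : Type*} [Fintype Ω] {k g r l μ : ℕ}
    {SX : Fin μ × Fin r → Type*} {SL : Fin μ × Fin l → Type*} {SG : Fin g → Type*}
    (p : Ω → ℝ) (hp0 : ∀ ω, 0 ≤ p ω) (hp1 : ∑ ω, p ω = 1)
    (α : ℝ) (hα : 0 < α)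
    (hr : 1 ≤ r) (hl : 1 ≤ l) (hμ : 1 ≤ μ) (hk : k = μ * r)
    (X : (x : Fin μ × Fin r) → Ω → SX x)
    (L : (a : Fin μ × Fin l) → Ω → SL a)
    (G : (i : Fin g) → Ω → SG i)
    (hXindep : entropy p (tupleOn X Finset.univ) = ∑ x, entropy p (X x))
    (hXα : ∀ x, entropy p (X x) = α)
    (hL : ∀ τ : Fin μ,
        condEntropy p (tupleOn L (Finset.univ.filter fun a => a.1 = τ))
          (tupleOn X (Finset.univ.filter fun x => x.1 = τ)) = 0)
    (hLcap : ∀ a, entropy p (L a) ≤ α)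
    (hG : condEntropy p (tupleOn G Finset.univ) (tupleOn X Finset.univ) = 0)
    (hGcap : ∀ i, entropy p (G i) ≤ α)
    (hopt : ∀ (Q : Finset (Fin g)) (R : Finset (Fin μ × Fin l))
        (S : Finset (Fin μ × Fin r)),
        Q.card + R.card + S.card ≤ g + l →
        condEntropy p
          (fun ω => (tupleOn G Q ω, tupleOn L R ω, tupleOn X S ω))
          (fun ω => (tupleOn G (Finset.univ \ Q) ω, tupleOn L (Finset.univ \ R) ω,
            tupleOn X (Finset.univ \ S) ω)) = 0)
    (τ : Fin μ)
    (A : Finset (Fin g)) (B : Finset (Fin μ × Fin l)) (D : Finset (Fin μ × Fin r))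
    (hB : B ⊆ Finset.univ.filter fun a => a.1 = τ)
    (hD : D ⊆ Finset.univ.filter fun x => x.1 = τ)
    (hcard : A.card + B.card + D.card ≤ r) :
    condEntropy p (fun ω => (tupleOn G A ω, tupleOn L B ω, tupleOn X D ω))
        (tupleOn X (Finset.univ.filter fun x => x.1 ≠ τ))
      = ((A.card + B.card + D.card : ℕ) : ℝ) * α :=
  optimal_lrc_storage_conditional_uniformity_general p hp0 hp1 α X L G hXindep hXα hL hLcap hGcap
    hopt τ A B D hB hD hcard
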